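/- Let d be a fundamental discriminant with d > 1 (so d is squarefree or d/4 is squarefree, d ≡ 0 or 1 mod 4). Then the quadratic forms Q = [c, d, 0] (i.e., Q(x,y) = cx² + dxy) with 0 ≤ c < d, of discriminant d², form a complete set of representatives for the action of PSL₂(ℤ) on integral binary quadratic forms of discriminant d². That is, every integral binary quadratic form [a,b,c'] with b² − 4ac' = d² is PSL₂(ℤ)-equivalent to exactly one form [c, d, 0] with 0 ≤ c < d. -/

import Mathlib

/-!
A form of square discriminant `d²` is isotropic: it has a primitive zero `(p, r)`, and a
substitution sending `(1, 0)` to `(p, r)` gives a form `[0, ±d, c]`. The swap `(x, y) ↦ (-y, x)`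
turns `[0, -d, c]` into `[c, d, 0]`; for `[0, d, c]`, sending `(0, 1)` to a primitive vector on
its other isotropic line gives some `[c', d, 0]`. The substitutions `y ↦ y + k x` change `c'`
exactly by the multiples of `d`. Conversely, a substitution between `[c₁, d, 0]` and
`[c₂, d, 0]` sends `(0, 1)` to an isotropic vector of `[c₁, d, 0]`; the isotropic line other
than that of `(0, 1)` would flip the sign of `d`, so the substitution is `± [1, 0; k, 1]` and
`c₂ = c₁ + k d`.
-/

/-- An integral binary quadratic form `[a,b,c]`, i.e. `Q(x,y) = a x² + b x y + c y²`. -/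
structure BQF where
  a : ℤ
  b : ℤ
  c : ℤ

/-- The discriminant `b² - 4ac` of a binary quadratic form. -/
def BQF.disc (Q : BQF) : ℤ := Q.b ^ 2 - 4 * Q.a * Q.c

/-- The substitution action of `SL₂(ℤ)` (factoring through `PSL₂(ℤ)`) on binary
quadratic forms: `(γ·Q)(x,y) = Q((x,y)·γ)`. -/
def BQF.act (γ : Matrix.SpecialLinearGroup (Fin 2) ℤ) (Q : BQF) : BQF :=
  { a := Q.a * (γ.1 0 0) ^ 2 + Q.b * (γ.1 0 0) * (γ.1 1 0) + Q.c * (γ.1 1 0) ^ 2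
    b := 2 * Q.a * (γ.1 0 0) * (γ.1 0 1) + Q.b * ((γ.1 0 0) * (γ.1 1 1) + (γ.1 0 1) * (γ.1 1 0))
          + 2 * Q.c * (γ.1 1 0) * (γ.1 1 1)
    c := Q.a * (γ.1 0 1) ^ 2 + Q.b * (γ.1 0 1) * (γ.1 1 1) + Q.c * (γ.1 1 1) ^ 2 }

/-- `d` is a fundamental discriminant: either `d ≡ 1 (mod 4)` and squarefree, or
`d = 4m` with `m` squarefree and `m ≡ 2, 3 (mod 4)`. -/
def IsFundamentalDiscriminant (d : ℤ) : Prop :=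
  (d % 4 = 1 ∧ Squarefree d) ∨
    (d % 4 = 0 ∧ Squarefree (d / 4) ∧ ((d / 4) % 4 = 2 ∨ (d / 4) % 4 = 3))

namespace Matrix.SpecialLinearGroup

theorem det_fin_two_eq_one (γ : SpecialLinearGroup (Fin 2) ℤ) :
    γ.1 0 0 * γ.1 1 1 - γ.1 0 1 * γ.1 1 0 = 1 := by
  rw [← det_fin_two]; exact γ.det_coe

def ofFinTwo (p q r s : ℤ) (h : p * s - q * r = 1) : SpecialLinearGroup (Fin 2) ℤ :=
  ⟨!![p, q; r, s], by rw [det_fin_two_of, h]⟩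

end Matrix.SpecialLinearGroup

open Matrix SpecialLinearGroup

namespace BQF

def eval (Q : BQF) (x y : ℤ) : ℤ := Q.a * x ^ 2 + Q.b * x * y + Q.c * y ^ 2

theorem eval_mul (Q : BQF) (g x y : ℤ) : Q.eval (g * x) (g * y) = g ^ 2 * Q.eval x y := by
  simp only [eval]; ring

theorem act_ofFinTwo (p q r s : ℤ) (h : p * s - q * r = 1) (Q : BQF) :
    act (ofFinTwo p q r s h) Q =
      ⟨Q.eval p r, 2 * Q.a * p * q + Q.b * (p * s + q * r) + 2 * Q.c * r * s, Q.eval q s⟩ := by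
  simp [act, ofFinTwo, eval]

theorem act_one (Q : BQF) : act 1 Q = Q := by
  simp [act]

theorem act_act (γ δ : SpecialLinearGroup (Fin 2) ℤ) (Q : BQF) :
    act δ (act γ Q) = act (γ * δ) Q := by
  simp only [act, Matrix.SpecialLinearGroup.coe_mul, Matrix.mul_apply, Fin.sum_univ_two, mk.injEq]
  exact ⟨by ring, by ring, by ring⟩

theorem disc_act (γ : SpecialLinearGroup (Fin 2) ℤ) (Q : BQF) : (act γ Q).disc = Q.disc := by
  simp only [disc, act]
  linear_combination (Q.b ^ 2 - 4 * Q.a * Q.c) *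
    (γ.1 0 0 * γ.1 1 1 - γ.1 0 1 * γ.1 1 0 + 1) * γ.det_fin_two_eq_one

def Equiv (Q R : BQF) : Prop := ∃ γ : SpecialLinearGroup (Fin 2) ℤ, act γ Q = R

theorem Equiv.trans {Q R S : BQF} (h₁ : Q.Equiv R) (h₂ : R.Equiv S) : Q.Equiv S := by
  obtain ⟨γ, rfl⟩ := h₁
  obtain ⟨δ, rfl⟩ := h₂
  exact ⟨γ * δ, (act_act γ δ Q).symm⟩

theorem Equiv.symm {Q R : BQF} (h : Q.Equiv R) : R.Equiv Q := by
  obtain ⟨γ, rfl⟩ := h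
  exact ⟨γ⁻¹, by rw [act_act, mul_inv_cancel, act_one]⟩

theorem Equiv.disc_eq {Q R : BQF} (h : Q.Equiv R) : Q.disc = R.disc := by
  obtain ⟨γ, rfl⟩ := h
  exact (disc_act γ Q).symm

theorem exists_isCoprime_eval_eq_zero_of_disc_eq_sq {Q : BQF} {d : ℤ} (hQ : Q.disc = d ^ 2) :
    ∃ p r, IsCoprime p r ∧ Q.eval p r = 0 := by
  by_cases ha : Q.a = 0
  · exact ⟨1, 0, isCoprime_one_left, by simp [eval, ha]⟩
  rw [disc] at hQ
  have hpar : Even (d - Q.b) := by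
    have : Even (d ^ 2 - Q.b ^ 2) := ⟨-(2 * Q.a * Q.c), by linarith⟩
    rwa [Int.even_sub, Int.even_pow' two_ne_zero, Int.even_pow' two_ne_zero,
      ← Int.even_sub] at this
  obtain ⟨x, hx⟩ := hpar
  -- `x = (d - b) / 2` is a root of `t² + b t + a c`, so `Q (x, a) = a (x² + b x + a c) = 0`.
  have hroot : Q.eval x Q.a = 0 := by
    have : 4 * Q.eval x Q.a = 0 := by
      simp only [eval]
      linear_combination (-(2 * x + Q.b + d) * Q.a) * hx - Q.a * hQ
    simpa using this
  obtain ⟨g, p, r, hg, hpr, rfl, hr⟩ := Int.exists_gcd_one' (Int.gcd_pos_of_ne_zero_right x ha)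
  refine ⟨p, r, Int.isCoprime_iff_gcd_eq_one.mpr hpr, ?_⟩
  rw [hr, mul_comm p, mul_comm r, eval_mul] at hroot
  exact (mul_eq_zero.mp hroot).resolve_left (by positivity)

theorem exists_equiv_a_eq_zero_of_eval_eq_zero {Q : BQF} {p r : ℤ} (hpr : IsCoprime p r)
    (hQ : Q.eval p r = 0) : ∃ b c, Q.Equiv ⟨0, b, c⟩ := by
  obtain ⟨u, v, huv⟩ := hpr
  exact ⟨_, _, ofFinTwo p (-v) r u (by linear_combination huv), by rw [act_ofFinTwo, hQ]⟩

theorem mk_zero_neg_equiv (d c : ℤ) : Equiv ⟨0, -d, c⟩ ⟨c, d, 0⟩ :=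
  ⟨ofFinTwo 0 (-1) 1 0 (by norm_num), by simp [act_ofFinTwo, eval]⟩

theorem exists_mk_zero_equiv {d : ℤ} (hd : d ≠ 0) (c : ℤ) :
    ∃ c', Equiv ⟨0, d, c⟩ ⟨c', d, 0⟩ := by
  obtain ⟨g, e, f, -, hef, rfl, rfl⟩ := Int.exists_gcd_one' (Int.gcd_pos_of_ne_zero_left c hd)
  obtain ⟨u, v, huv⟩ := Int.isCoprime_iff_gcd_eq_one.mpr hef
  -- `(-f, e)` spans the isotropic line `e x + f y = 0` of `[0, d, c] = g y (e x + f y)`.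
  refine ⟨eval ⟨0, e * g, f * g⟩ u v, ofFinTwo u (-f) v e (by linear_combination huv), ?_⟩
  rw [act_ofFinTwo, mk.injEq]
  refine ⟨rfl, ?_, ?_⟩
  · linear_combination (g : ℤ) * e * huv
  · simp only [eval]; ring

theorem mk_equiv_mk_emod (a d : ℤ) : Equiv ⟨a, d, 0⟩ ⟨a % d, d, 0⟩ :=
  ⟨ofFinTwo 1 0 (-(a / d)) 1 (by ring), by
    rw [act_ofFinTwo, mk.injEq, Int.emod_def]
    simp only [eval]
    exact ⟨by ring, by ring, by ring⟩⟩

theorem exists_equiv_of_disc_eq_sq {Q : BQF} {d : ℤ} (hd : 0 < d) (hQ : Q.disc = d ^ 2) :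
    ∃ c, Q.Equiv ⟨c, d, 0⟩ := by
  obtain ⟨p, r, hpr, hzero⟩ := exists_isCoprime_eval_eq_zero_of_disc_eq_sq hQ
  obtain ⟨b, c, hQbc⟩ := exists_equiv_a_eq_zero_of_eval_eq_zero hpr hzero
  have hb : (b - d) * (b + d) = 0 := by
    have := hQbc.disc_eq
    rw [hQ] at this
    simp only [disc] at this
    linear_combination -this
  rcases mul_eq_zero.mp hb with hb | hb
  · rw [sub_eq_zero.mp hb] at hQbc
    obtain ⟨c', hc'⟩ := exists_mk_zero_equiv hd.ne' c
    exact ⟨c', hQbc.trans hc'⟩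
  · rw [eq_neg_of_add_eq_zero_left hb] at hQbc
    exact ⟨c, hQbc.trans (mk_zero_neg_equiv d c)⟩

theorem eq_of_mk_equiv_mk {d c₁ c₂ : ℤ} (hd : 0 < d) (h₁ : 0 ≤ c₁ ∧ c₁ < d)
    (h₂ : 0 ≤ c₂ ∧ c₂ < d) (h : Equiv ⟨c₁, d, 0⟩ ⟨c₂, d, 0⟩) :
    c₁ = c₂ := by
  obtain ⟨γ, hγ⟩ := h
  have hdet := γ.det_fin_two_eq_one
  set p := γ.1 0 0
  set q := γ.1 0 1
  set r := γ.1 1 0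
  set s := γ.1 1 1
  simp only [act, mk.injEq] at hγ
  obtain ⟨ha, hb, hc⟩ := hγ
  rcases mul_eq_zero.mp (show q * (c₁ * q + d * s) = 0 by linear_combination hc) with hq | hq
  · have hp : p ^ 2 = 1 := Int.isUnit_sq (IsUnit.of_mul_eq_one s (by rw [hq] at hdet; linarith))
    have hc₂ : c₂ = c₁ + d * (p * r) := by linear_combination -ha + c₁ * hp
    rw [← Int.emod_eq_of_lt h₁.1 h₁.2, ← Int.emod_eq_of_lt h₂.1 h₂.2, hc₂,
      Int.add_mul_emod_self_left]
  · have : d * 2 = 0 := by linear_combination -hb + (2 * p) * hq - d * hdet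
    omega

end BQF

theorem representatives_of_square_discriminant_general
    (d : ℤ) (hd1 : 1 < d)
    (Q : BQF) (hQ : Q.disc = d ^ 2) :
    ∃! c : ℤ, (0 ≤ c ∧ c < d) ∧
      ∃ γ : Matrix.SpecialLinearGroup (Fin 2) ℤ, BQF.act γ Q = ⟨c, d, 0⟩ := by
  have hd : 0 < d := by omega
  obtain ⟨c, hc⟩ := BQF.exists_equiv_of_disc_eq_sq hd hQ
  have hc_mod : Q.Equiv ⟨c % d, d, 0⟩ := hc.trans (BQF.mk_equiv_mk_emod c d)
  have hc_mem : 0 ≤ c % d ∧ c % d < d := ⟨Int.emod_nonneg c hd.ne', Int.emod_lt_of_pos c hd⟩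
  refine ⟨c % d, ⟨hc_mem, hc_mod⟩, ?_⟩
  rintro c' ⟨hc', hQc' : Q.Equiv _⟩
  exact BQF.eq_of_mk_equiv_mk hd hc' hc_mem (hQc'.symm.trans hc_mod)

/-- For a fundamental discriminant `d > 1`, the forms `[c, d, 0]` with `0 ≤ c < d` are a
complete set of representatives for `PSL₂(ℤ)\𝒬_{d²}`: every form of discriminant `d²`
is equivalent to exactly one of them. -/
theorem representatives_of_square_discriminant
    (d : ℤ) (hd : IsFundamentalDiscriminant d) (hd1 : 1 < d)
    (Q : BQF) (hQ : Q.disc = d ^ 2) :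
    ∃! c : ℤ, (0 ≤ c ∧ c < d) ∧
      ∃ γ : Matrix.SpecialLinearGroup (Fin 2) ℤ, BQF.act γ Q = ⟨c, d, 0⟩ :=
  representatives_of_square_discriminant_general d hd1 Q hQ
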